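/- Let m, β, R > 0, μ ∈ ℝ, u(E) := √(2mE)·exp(−β(E−μ)), let l₁,…,l₄ ≥ 0, D diagonal with D_{ii} = 2l_i, and let T : (0,∞) → ℝ^{4×4} be measurable with nonnegative entries satisfying Σ_i T(E)_{ji} = 2l_j and Σ_j T(E)_{ji} = 2l_i for all E > 0. With W(E) := [[1, E−μ],[E−μ,(E−μ)²]], assume E ↦ u(E)(D−T(E))⊗W(E) is entrywise integrable on (0,∞) and set L′ := ∫₀^∞ u(E)(D−T(E))⊗W(E) dE ∈ ℝ^{8×8}, with rows and columns indexed by pairs (i,a), i ∈ {1,…,4}, a ∈ {ρ,q} (Kronecker ordering: a = ρ is the first, a = q the second component). Let M₁₁ ∈ ℝ^{2×2} be the submatrix of L′ with row and column indices, in order, (4,ρ),(3,q); let M₂₂ ∈ ℝ^{4×4} be the submatrix with row and column indices, in order, (4,q),(3,ρ),(1,ρ),(2,q); let M₁₂ (resp. M₂₁) be the 2×4 (resp. 4×2) submatrix with the corresponding row and column index lists. Assume M₂₂ is invertible, and define the Schur complement 𝕃 := M₁₁ − M₁₂ M₂₂⁻¹ M₂₁ ∈ ℝ^{2×2}. Then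 the Hermitian matrix 𝕂 := (𝕃 + 𝕃ᵀ) + i(𝕃 − 𝕃ᵀ) is positive semi-definite on ℂ², i.e. z†𝕂z ≥ 0 for all z ∈ ℂ². -/

import Mathlib

open Matrix Kronecker Complex ComplexOrder MeasureTheory

/-- The weight function `u(E) = √(2mE) · exp(−β(E−μ))`. -/
noncomputable def uWeight (m β μ E : ℝ) : ℝ :=
  Real.sqrt (2 * m * E) * Real.exp (-β * (E - μ))

/-- The diagonal matrix `D` with `D_{ii} = 2 lᵢ`. -/
def Dmat (l : Fin 4 → ℝ) : Matrix (Fin 4) (Fin 4) ℝ :=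
  Matrix.diagonal fun i => 2 * l i

/-- The energy-dependent `2 × 2` weight matrix `W(E) = [[1, E−μ],[E−μ,(E−μ)²]]`. -/
noncomputable def Wmat (μ E : ℝ) : Matrix (Fin 2) (Fin 2) ℝ :=
  !![1, E - μ; E - μ, (E - μ) ^ 2]

/-- The primary Onsager matrix `L′ = ∫₀^∞ u(E) (D − T(E)) ⊗ W(E) dE`, defined
entrywise; rows and columns are indexed by pairs `(i, a)`, `i ∈ Fin 4`,
`a ∈ Fin 2` (`a = 0` is `ρ`, `a = 1` is `q`). -/
noncomputable def Lmat (m β μ : ℝ) (l : Fin 4 → ℝ)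
    (T : ℝ → Matrix (Fin 4) (Fin 4) ℝ) :
    Matrix (Fin 4 × Fin 2) (Fin 4 × Fin 2) ℝ :=
  Matrix.of fun p q => ∫ E in Set.Ioi (0 : ℝ),
    uWeight m β μ E * ((Dmat l - T E) ⊗ₖ Wmat μ E) p q

/-- Row/column index list of the block `M₁₁`: `(4,ρ), (3,q)`. -/
def idx1 : Fin 2 → Fin 4 × Fin 2 := ![(3, 0), (2, 1)]

/-- Row/column index list of the block `M₂₂`: `(4,q), (3,ρ), (1,ρ), (2,q)`. -/
def idx2 : Fin 4 → Fin 4 × Fin 2 := ![(3, 1), (2, 0), (0, 0), (1, 1)]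

/-!
Put `A := (1 + i) 𝕃`; then `𝕂 = A + Aᴴ`, so `z† 𝕂 z = 2 Re (z† A z)` and it suffices that the
twisted form `Re ((1 + i) z† M z)` is nonnegative for `M = 𝕃`. Nonnegativity of this form passes
from a matrix to its principal submatrices and to Schur complements (evaluate the block matrix
at `(z, -M₂₂⁻¹ M₂₁ z)`), survives nonnegative combinations and integrals, and passes from `M` to
`M ⊗ v vᵀ`; as `W(E) = v vᵀ` with `v = (1, E - μ)`, everything reduces to `D - T(E)`.
By Birkhoff's theorem `D - T` is a nonnegative combination of matrices `1 - P_σ`, whose twisted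
form splits into sums over the cycles of `σ`. On a cycle of length `k` the eigenvalues `ω` of
`P_σ` are the `k`-th roots of unity, and `Re ((1 + i)(1 - ω)) = 1 - Re ω + Im ω` is nonnegative for
all of them exactly when `k ≤ 4`: this is where the size `4` of `T` enters.
-/

open ComplexConjugate Equiv

section TwistedForm

variable {n m : Type*} [Fintype n] [Fintype m]

noncomputable def twistedForm (M : Matrix n n ℝ) (z : n → ℂ) : ℝ :=
  ((1 + I) * (star z ⬝ᵥ M.map ofReal *ᵥ z)).re

theorem twistedForm_eq_sum (M : Matrix n n ℝ) (z : n → ℂ) :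
    twistedForm M z = ∑ p, ∑ q, ((1 + I) * (conj (z p) * z q)).re * M p q := by
  simp only [twistedForm, dotProduct, mulVec, Finset.mul_sum, re_sum, map_apply, Pi.star_apply,
    RCLike.star_def]
  refine Finset.sum_congr rfl fun p _ => Finset.sum_congr rfl fun q _ => ?_
  rw [show (1 + I) * (conj (z p) * ((M p q : ℂ) * z q))
    = (M p q : ℂ) * ((1 + I) * (conj (z p) * z q)) by ring, re_ofReal_mul, mul_comm]

theorem star_dotProduct_transpose_map_mulVec (M : Matrix n n ℝ) (z : n → ℂ) :
    star z ⬝ᵥ Mᵀ.map ofReal *ᵥ z = conj (star z ⬝ᵥ M.map ofReal *ᵥ z) := by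
  simp only [dotProduct, mulVec, map_sum, map_mul, Finset.mul_sum, Pi.star_apply, RCLike.star_def,
    map_apply, transpose_apply, conj_ofReal, conj_conj]
  rw [Finset.sum_comm]
  exact Finset.sum_congr rfl fun p _ => Finset.sum_congr rfl fun q _ => by ring

theorem star_dotProduct_onsager_mulVec (M : Matrix n n ℝ) (z : n → ℂ) :
    star z ⬝ᵥ ((M + Mᵀ).map ofReal + I • (M - Mᵀ).map ofReal) *ᵥ z
      = (2 * twistedForm M z : ℝ) := by
  have hsplit : ((M + Mᵀ).map ofReal + I • (M - Mᵀ).map ofReal)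
      = (1 + I) • M.map ofReal + (1 - I) • Mᵀ.map ofReal := by
    ext p q
    simp only [Matrix.add_apply, map_apply, Matrix.smul_apply, Matrix.sub_apply, transpose_apply,
      smul_eq_mul]
    push_cast; ring
  rw [hsplit, add_mulVec, smul_mulVec, smul_mulVec, dotProduct_add, dotProduct_smul,
    dotProduct_smul, star_dotProduct_transpose_map_mulVec, twistedForm, ofReal_mul, re_eq_add_conj]
  simp only [smul_eq_mul, map_mul, map_add, conj_I, map_one]
  push_cast
  ring

theorem twistedForm_smul (c : ℝ) (M : Matrix n n ℝ) (z : n → ℂ) :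
    twistedForm (c • M) z = c * twistedForm M z := by
  simp only [twistedForm_eq_sum, Matrix.smul_apply, smul_eq_mul, Finset.mul_sum]
  exact Finset.sum_congr rfl fun p _ => Finset.sum_congr rfl fun q _ => by ring

theorem twistedForm_sum_smul {ι : Type*} (s : Finset ι) (c : ι → ℝ) (M : ι → Matrix n n ℝ)
    (z : n → ℂ) : twistedForm (∑ i ∈ s, c i • M i) z = ∑ i ∈ s, c i * twistedForm (M i) z := by
  simp only [twistedForm_eq_sum, Matrix.sum_apply, Matrix.smul_apply, smul_eq_mul,
    Finset.mul_sum]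
  symm
  rw [Finset.sum_comm]
  refine Finset.sum_congr rfl fun p _ => ?_
  rw [Finset.sum_comm]
  exact Finset.sum_congr rfl fun q _ => Finset.sum_congr rfl fun i _ => by ring

theorem twistedForm_submatrix [DecidableEq n] (M : Matrix n n ℝ) (e : m → n) (z : m → ℂ) :
    twistedForm (M.submatrix e e) z = twistedForm M ((1 : Matrix n n ℂ).submatrix id e *ᵥ z) := by
  have hsub : (M.map ofReal).submatrix e e
      = ((1 : Matrix n n ℂ).submatrix id e)ᴴ * M.map ofReal
        * (1 : Matrix n n ℂ).submatrix id e := by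
    ext i j
    simp [conjTranspose_submatrix, Matrix.mul_apply, one_apply]
  rw [twistedForm, twistedForm, ← submatrix_map, hsub, star_mulVec, ← dotProduct_mulVec,
    mulVec_mulVec, mulVec_mulVec]

theorem twistedForm_integral {α : Type*} [MeasurableSpace α] {ν : Measure α}
    (K : α → Matrix n n ℝ) (hK : ∀ p q, Integrable (fun x => K x p q) ν) (z : n → ℂ) :
    twistedForm (Matrix.of fun p q => ∫ x, K x p q ∂ν) z = ∫ x, twistedForm (K x) z ∂ν := by
  simp only [twistedForm_eq_sum, of_apply]
  rw [integral_finsetSum _ fun p _ => integrable_finsetSum _ fun q _ => (hK p q).const_mul _]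
  refine Finset.sum_congr rfl fun p _ => ?_
  rw [integral_finsetSum _ fun q _ => (hK p q).const_mul _]
  exact Finset.sum_congr rfl fun q _ => (integral_const_mul _ _).symm

theorem twistedForm_kronecker_vecMulVec (M : Matrix n n ℝ) (v : m → ℝ) (x : n × m → ℂ) :
    twistedForm (M ⊗ₖ vecMulVec v v) x = twistedForm M (fun i => ∑ a, v a * x (i, a)) := by
  simp only [twistedForm_eq_sum, Fintype.sum_prod_type, kroneckerMap_apply, vecMulVec_apply,
    map_sum, map_mul, conj_ofReal, Finset.mul_sum, Finset.sum_mul, re_sum]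
  refine Finset.sum_congr rfl fun i _ => ?_
  rw [Finset.sum_comm]
  refine Finset.sum_congr rfl fun j _ => ?_
  rw [Finset.sum_comm]
  refine Finset.sum_congr rfl fun b _ => Finset.sum_congr rfl fun a _ => ?_
  rw [show (1 + I) * ((v a : ℂ) * conj (x (i, a)) * ((v b : ℂ) * x (j, b)))
    = ((v a * v b : ℝ) : ℂ) * ((1 + I) * (conj (x (i, a)) * x (j, b))) by push_cast; ring,
    re_ofReal_mul]
  ring

theorem fromBlocks_mulVec_sumElim_neg_mulVec {R κ ι : Type*} [Fintype κ] [Fintype ι] [Ring R]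
    (A : Matrix κ κ R) (B : Matrix κ ι R) (C : Matrix ι κ R) (D : Matrix ι ι R)
    {X : Matrix ι κ R} (hX : D * X = C) (z : κ → R) :
    fromBlocks A B C D *ᵥ Sum.elim z (-(X *ᵥ z)) = Sum.elim ((A - B * X) *ᵥ z) 0 := by
  rw [fromBlocks_mulVec]
  simp only [Sum.elim_comp_inl, Sum.elim_comp_inr, mulVec_neg, mulVec_mulVec, ← sub_eq_add_neg,
    hX, sub_self, sub_mulVec]

theorem twistedForm_schur {κ ι : Type*} [Fintype κ] [Fintype ι]
    (A : Matrix κ κ ℝ) (B : Matrix κ ι ℝ) (C : Matrix ι κ ℝ) (D : Matrix ι ι ℝ)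
    {X : Matrix ι κ ℝ} (hX : D * X = C) (z : κ → ℂ) :
    twistedForm (A - B * X) z
      = twistedForm (fromBlocks A B C D) (Sum.elim z (-(X.map ofReal *ᵥ z))) := by
  have hBX : (B * X).map ofReal = B.map ofReal * X.map ofReal := Matrix.map_mul (f := ofRealHom)
  have hXℂ : D.map ofReal * X.map ofReal = C.map ofReal := by
    rw [← hX]; exact (Matrix.map_mul (f := ofRealHom)).symm
  rw [twistedForm, twistedForm, fromBlocks_map, fromBlocks_mulVec_sumElim_neg_mulVec _ _ _ _ hXℂ,
    Function.star_sumElim, sumElim_dotProduct_sumElim, dotProduct_zero, add_zero,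
    Matrix.map_sub _ ofReal_sub, hBX]

theorem submatrix_sumElim {α ι κ₁ κ₂ : Type*} (N : Matrix ι ι α) (e₁ : κ₁ → ι) (e₂ : κ₂ → ι) :
    N.submatrix (Sum.elim e₁ e₂) (Sum.elim e₁ e₂) = fromBlocks (N.submatrix e₁ e₁)
      (N.submatrix e₁ e₂) (N.submatrix e₂ e₁) (N.submatrix e₂ e₂) := by
  ext (i | i) (j | j) <;> rfl

end TwistedForm

section Permutations

noncomputable def twistedEdge (a b : ℂ) : ℝ := normSq (a - b) / 2 + (conj a * b).im

theorem twistedEdge_self (a : ℂ) : twistedEdge a a = 0 := by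
  simp [twistedEdge, mul_im]; ring

theorem twistedEdge_cycle₂_nonneg (a b : ℂ) : 0 ≤ twistedEdge a b + twistedEdge b a := by
  simp only [twistedEdge, normSq_apply, mul_im, conj_re, conj_im, sub_re, sub_im]
  nlinarith [sq_nonneg (a.re - b.re), sq_nonneg (a.im - b.im)]

theorem twistedEdge_cycle₃_nonneg (a b c : ℂ) :
    0 ≤ twistedEdge a b + twistedEdge b c + twistedEdge c a := by
  simp only [twistedEdge, normSq_apply, mul_im, conj_re, conj_im, sub_re, sub_im]
  nlinarith [sq_nonneg (a.re - b.re/2 + b.im/2 - c.re/2 - c.im/2),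
    sq_nonneg (a.im - b.re/2 - b.im/2 + c.re/2 - c.im/2),
    sq_nonneg (b.re - c.re), sq_nonneg (b.im - c.im)]

theorem twistedEdge_cycle₄_nonneg (a b c d : ℂ) :
    0 ≤ twistedEdge a b + twistedEdge b c + twistedEdge c d + twistedEdge d a := by
  simp only [twistedEdge, normSq_apply, mul_im, conj_re, conj_im, sub_re, sub_im]
  nlinarith [sq_nonneg (a.re - b.re/2 + b.im/2 - d.re/2 - d.im/2),
    sq_nonneg (a.im - b.re/2 - b.im/2 + d.re/2 - d.im/2),
    sq_nonneg (b.re - c.re + c.im - d.im),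
    sq_nonneg (b.im - c.re - c.im + d.re)]

theorem twistedForm_one_sub_permMatrix {n : Type*} [Fintype n] [DecidableEq n] (σ : Perm n)
    (w : n → ℂ) : twistedForm (1 - σ.permMatrix ℝ) w = ∑ i, twistedEdge (w i) (w (σ i)) := by
  have hedge : ∀ a b : ℂ, twistedEdge a b = ((1 + I) * (conj a * a)).re
      - ((1 + I) * (conj a * b)).re + (normSq b - normSq a) / 2 := by
    intro a b
    simp only [twistedEdge, normSq_apply, mul_re, mul_im, conj_re, conj_im, sub_re, sub_im, add_re,
      add_im, one_re, one_im, I_re, I_im]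
    ring
  have hnormSq : ∑ i, (normSq (w (σ i)) - normSq (w i)) / 2 = 0 := by
    rw [← Finset.sum_div, Finset.sum_sub_distrib, Equiv.sum_comp σ (fun i => normSq (w i)),
      sub_self, zero_div]
  simp only [hedge, Finset.sum_add_distrib, hnormSq, add_zero, twistedForm_eq_sum]
  refine Finset.sum_congr rfl fun p _ => ?_
  simp [Matrix.sub_apply, one_apply, Perm.permMatrix, PEquiv.toMatrix_apply, mul_sub,
    Finset.sum_sub_distrib]

theorem sum_twistedEdge_conj {n : Type*} [Fintype n] (σ τ : Perm n) (w : n → ℂ) :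
    ∑ i, twistedEdge (w i) (w ((τ * σ * τ⁻¹) i)) = ∑ i, twistedEdge (w (τ i)) (w (τ (σ i))) := by
  rw [← Equiv.sum_comp τ]
  simp [Perm.mul_apply]

/-- One representative of each of the five cycle types of `S₄`. -/
theorem Equiv.Perm.exists_isConj_fin_four (σ : Perm (Fin 4)) :
    ∃ c ∈ [1, swap 0 1, swap 0 1 * swap 2 3, swap 0 1 * swap 1 2, swap 0 1 * swap 1 2 * swap 2 3],
      IsConj c σ := by
  revert σ; decide

theorem sum_twistedEdge_perm_nonneg (σ : Perm (Fin 4)) (w : Fin 4 → ℂ) :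
    0 ≤ ∑ i, twistedEdge (w i) (w (σ i)) := by
  obtain ⟨c, hc, hconj⟩ := σ.exists_isConj_fin_four
  obtain ⟨τ, rfl⟩ := isConj_iff.1 hconj
  rw [sum_twistedEdge_conj]
  simp only [List.mem_cons, List.not_mem_nil, or_false] at hc
  rcases hc with rfl | rfl | rfl | rfl | rfl <;>
    simp only [Fin.isValue, Perm.coe_one, id_eq, Perm.coe_mul, Function.comp_apply,
      swap_apply_def, Fin.sum_univ_four, ↓reduceIte, Fin.reduceEq, zero_ne_one, one_ne_zero,
      twistedEdge_self, add_zero, le_refl]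
  · exact twistedEdge_cycle₂_nonneg _ _
  · linarith [twistedEdge_cycle₂_nonneg (w (τ 0)) (w (τ 1)),
      twistedEdge_cycle₂_nonneg (w (τ 2)) (w (τ 3))]
  · exact twistedEdge_cycle₃_nonneg _ _ _
  · exact twistedEdge_cycle₄_nonneg _ _ _ _

theorem exists_diagonal_sub_eq_sum_smul_one_sub_permMatrix {n : Type*} [Fintype n] [DecidableEq n]
    (T : Matrix n n ℝ) (r : n → ℝ) (hT : ∀ i j, 0 ≤ T i j) (hrow : ∀ i, ∑ j, T i j = r i)
    (hcol : ∀ j, ∑ i, T i j = r j) :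
    ∃ c : Perm n → ℝ, (∀ σ, 0 ≤ c σ) ∧ diagonal r - T = ∑ σ, c σ • (1 - σ.permMatrix ℝ) := by
  have hr : ∀ i, 0 ≤ r i := fun i => hrow i ▸ Finset.sum_nonneg fun j _ => hT i j
  set s := 1 + ∑ i, r i
  have hs : 0 < s := by have := Finset.sum_nonneg fun i (_ : i ∈ Finset.univ) => hr i; linarith
  have hrs : ∀ i, r i ≤ s := fun i => by
    have := Finset.single_le_sum (fun j _ => hr j) (Finset.mem_univ i); linarith
  set S := T + diagonal (fun i => s - r i)
  have hdiag : ∀ i, ∑ j, diagonal (fun k => s - r k) i j = s - r i := by simp [diagonal_apply]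
  have hdiag' : ∀ j, ∑ i, diagonal (fun k => s - r k) i j = s - r j := by simp [diagonal_apply]
  have hS : s⁻¹ • S ∈ doublyStochastic ℝ n := by
    rw [mem_doublyStochastic_iff_sum]
    refine ⟨fun i j => ?_, fun i => ?_, fun j => ?_⟩
    · have := hT i j
      have := hrs i
      simp only [S, Matrix.smul_apply, Matrix.add_apply, diagonal_apply, smul_eq_mul]
      split_ifs <;> exact mul_nonneg (inv_nonneg.2 hs.le) (by linarith)
    · simp [S, Matrix.smul_apply, ← Finset.mul_sum, Finset.sum_add_distrib, hrow, hdiag, hs.ne']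
    · simp [S, Matrix.smul_apply, ← Finset.mul_sum, Finset.sum_add_distrib, hcol, hdiag', hs.ne']
  obtain ⟨c, hc0, hc1, hcS⟩ := exists_eq_sum_perm_of_mem_doublyStochastic hS
  refine ⟨fun σ => s * c σ, fun σ => mul_nonneg hs.le (hc0 σ), ?_⟩
  simp only [smul_sub, Finset.sum_sub_distrib, ← smul_smul, ← Finset.smul_sum, hcS,
    ← Finset.sum_smul, hc1, one_smul, smul_inv_smul₀ hs.ne']
  ext i j
  simp [S, diagonal_apply, one_apply]
  split_ifs <;> ring

theorem twistedForm_diagonal_sub_nonneg (T : Matrix (Fin 4) (Fin 4) ℝ) (r : Fin 4 → ℝ)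
    (hT : ∀ i j, 0 ≤ T i j) (hrow : ∀ i, ∑ j, T i j = r i) (hcol : ∀ j, ∑ i, T i j = r j)
    (w : Fin 4 → ℂ) : 0 ≤ twistedForm (diagonal r - T) w := by
  obtain ⟨c, hc, hdecomp⟩ := exists_diagonal_sub_eq_sum_smul_one_sub_permMatrix T r hT hrow hcol
  rw [hdecomp, twistedForm_sum_smul]
  refine Finset.sum_nonneg fun σ _ => mul_nonneg (hc σ) ?_
  rw [twistedForm_one_sub_permMatrix]
  exact sum_twistedEdge_perm_nonneg σ w

end Permutations

theorem uWeight_nonneg (m β μ E : ℝ) : 0 ≤ uWeight m β μ E :=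
  mul_nonneg (Real.sqrt_nonneg _) (Real.exp_pos _).le

theorem Wmat_eq_vecMulVec (μ E : ℝ) : Wmat μ E = vecMulVec ![1, E - μ] ![1, E - μ] := by
  ext i j
  fin_cases i <;> fin_cases j <;> simp [Wmat, vecMulVec_apply, sq]

theorem twistedForm_Lmat_nonneg (m β μ : ℝ) (l : Fin 4 → ℝ) (T : ℝ → Matrix (Fin 4) (Fin 4) ℝ)
    (hTnn : ∀ E ∈ Set.Ioi (0 : ℝ), ∀ i j, 0 ≤ T E i j)
    (hrow : ∀ E ∈ Set.Ioi (0 : ℝ), ∀ j, ∑ i, T E j i = 2 * l j)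
    (hcol : ∀ E ∈ Set.Ioi (0 : ℝ), ∀ i, ∑ j, T E j i = 2 * l i)
    (hint : ∀ p q, IntegrableOn
      (fun E => uWeight m β μ E * ((Dmat l - T E) ⊗ₖ Wmat μ E) p q) (Set.Ioi 0))
    (x : Fin 4 × Fin 2 → ℂ) : 0 ≤ twistedForm (Lmat m β μ l T) x := by
  rw [show twistedForm (Lmat m β μ l T) x = ∫ E in Set.Ioi 0,
      twistedForm (uWeight m β μ E • (Dmat l - T E) ⊗ₖ Wmat μ E) x from
    twistedForm_integral _ hint x]
  refine setIntegral_nonneg measurableSet_Ioi fun E hE => ?_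
  rw [twistedForm_smul, Wmat_eq_vecMulVec, twistedForm_kronecker_vecMulVec]
  exact mul_nonneg (uWeight_nonneg m β μ E)
    (twistedForm_diagonal_sub_nonneg _ _ (hTnn E hE) (hrow E hE) (hcol E hE) _)

theorem reduced_onsager_matrix_posSemidef (m β μ : ℝ)
    (l : Fin 4 → ℝ)
    (T : ℝ → Matrix (Fin 4) (Fin 4) ℝ)
    (hTnn : ∀ E ∈ Set.Ioi (0 : ℝ), ∀ i j, 0 ≤ T E i j)
    (hrow : ∀ E ∈ Set.Ioi (0 : ℝ), ∀ j, ∑ i, T E j i = 2 * l j)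
    (hcol : ∀ E ∈ Set.Ioi (0 : ℝ), ∀ i, ∑ j, T E j i = 2 * l i)
    (hint : ∀ p q, IntegrableOn
      (fun E => uWeight m β μ E * ((Dmat l - T E) ⊗ₖ Wmat μ E) p q) (Set.Ioi 0))
    (hInv : IsUnit ((Lmat m β μ l T).submatrix idx2 idx2).det)
    (L : Matrix (Fin 2) (Fin 2) ℝ)
    (hL : L = (Lmat m β μ l T).submatrix idx1 idx1
      - (Lmat m β μ l T).submatrix idx1 idx2
        * ((Lmat m β μ l T).submatrix idx2 idx2)⁻¹
        * (Lmat m β μ l T).submatrix idx2 idx1)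
    (z : Fin 2 → ℂ) :
    0 ≤ star z ⬝ᵥ
      (((L + Lᵀ).map Complex.ofReal)
        + Complex.I • ((L - Lᵀ).map Complex.ofReal)) *ᵥ z := by
  set N := Lmat m β μ l T
  have hX : N.submatrix idx2 idx2 * ((N.submatrix idx2 idx2)⁻¹ * N.submatrix idx2 idx1)
      = N.submatrix idx2 idx1 := by
    rw [← Matrix.mul_assoc, mul_nonsing_inv _ hInv, Matrix.one_mul]
  rw [star_dotProduct_onsager_mulVec, zero_le_real, hL, Matrix.mul_assoc,
    twistedForm_schur _ _ _ _ hX, ← submatrix_sumElim, twistedForm_submatrix]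
  exact mul_nonneg zero_le_two (twistedForm_Lmat_nonneg m β μ l T hTnn hrow hcol hint _)
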